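/- arXiv:2112.00056 — 5 statements merged into one kernel-verified Lean document; each statement's English description precedes it below -/
import Mathlib

section
/- For complex n×n strict contractions A and B, the 2n×2n block matrix [[(I-A*A)^{-1}, (I-A*B)^{-1}], [(I-B*A)^{-1}, (I-B*B)^{-1}]] is positive semidefinite. -/
open Matrix
open scoped ComplexOrder

noncomputable def opNorm {n : ℕ} (A : Matrix (Fin n) (Fin n) ℂ) : ℝ :=
  ‖(Matrix.toEuclideanCLM (𝕜 := ℂ) A : EuclideanSpace ℂ (Fin n) →L[ℂ] EuclideanSpace ℂ (Fin n))‖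

/-!
Write `C = 1 - Aᴴ B`; the (2,1) block is `C⁻¹ᴴ`. Since `(1 - Aᴴ A)⁻¹` is positive definite, the
block matrix is positive semidefinite iff its Schur complement `(1 - Bᴴ B)⁻¹ - C⁻¹ᴴ (1 - Aᴴ A) C⁻¹`
is, i.e. iff `Cᴴ (1 - Bᴴ B)⁻¹ C - (1 - Aᴴ A)` is. A noncommutative ring identity writes the
latter as `(A - B)ᴴ (A - B) + Xᴴ (1 - Bᴴ B)⁻¹ X` with `X = (A - B)ᴴ B`. The same identity shows
that `Cᴴ (1 - Bᴴ B)⁻¹ C` is positive definite, so `C` is invertible.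
-/

theorem star_mulVec_dotProduct_mulVec_lt_of_opNorm_lt_one {n : ℕ} {A : Matrix (Fin n) (Fin n) ℂ}
    (hA : opNorm A < 1) {v : Fin n → ℂ} (hv : v ≠ 0) :
    star (A *ᵥ v) ⬝ᵥ (A *ᵥ v) < star v ⬝ᵥ v := by
  have hsq (w : Fin n → ℂ) : star w ⬝ᵥ w = ((‖WithLp.toLp 2 w‖ ^ 2 : ℝ) : ℂ) := by
    rw [dotProduct_comm, ← EuclideanSpace.inner_toLp_toLp, inner_self_eq_norm_sq_to_K]
    push_cast; rfl
  have hv' : 0 < ‖WithLp.toLp 2 v‖ := norm_pos_iff.mpr (by simpa using hv)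
  have hAv : ‖WithLp.toLp 2 (A *ᵥ v)‖ ≤ opNorm A * ‖WithLp.toLp 2 v‖ :=
    (toEuclideanCLM (𝕜 := ℂ) A).le_opNorm (WithLp.toLp 2 v)
  rw [hsq, hsq, Complex.real_lt_real]
  exact pow_lt_pow_left₀ (hAv.trans_lt (mul_lt_of_lt_one_left hv' hA)) (norm_nonneg _) two_ne_zero

theorem posDef_one_sub_conjTranspose_mul_self {n : ℕ} {A : Matrix (Fin n) (Fin n) ℂ}
    (hA : opNorm A < 1) : (1 - Aᴴ * A).PosDef := by
  refine posDef_iff_dotProduct_mulVec.mpr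
    ⟨isHermitian_one.sub (isHermitian_conjTranspose_mul_self A), fun v hv => ?_⟩
  rw [sub_mulVec, dotProduct_sub, one_mulVec, ← mulVec_mulVec, dotProduct_mulVec, ← star_mulVec]
  exact sub_pos.mpr (star_mulVec_dotProduct_mulVec_lt_of_opNorm_lt_one hA hv)

theorem star_one_sub_mul_inv_mul_one_sub {R : Type*} [Ring R] [StarRing R] {a b l : R}
    (hl : l * (1 - star b * b) = 1) (hl' : (1 - star b * b) * l = 1) :
    star (1 - star a * b) * l * (1 - star a * b) =
      (1 - star a * a) + star (a - b) * (a - b) +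
        star (star (a - b) * b) * l * (star (a - b) * b) := by
  rw [← sub_eq_zero]
  calc _ = (1 - star b * a) * (l * (1 - star b * b) - 1)
          - ((1 - star b * b) * l - 1) * (star a * b - star b * b) := by
        simp only [star_sub, star_mul, star_one, star_star]; noncomm_ring
    _ = 0 := by rw [hl, hl', sub_self, mul_zero, zero_mul, sub_zero]

section Matrix

variable {K n : Type*} [Field K] [PartialOrder K] [StarRing K] [StarOrderedRing K]
  [Fintype n] [DecidableEq n]

/-- Hua's inequality `(1 - Aᴴ B)ᴴ (1 - Bᴴ B)⁻¹ (1 - Aᴴ B) ≥ 1 - Aᴴ A`. -/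
theorem posSemidef_conjTranspose_mul_inv_mul_sub {A B : Matrix n n K} (hB : (1 - Bᴴ * B).PosDef) :
    ((1 - Aᴴ * B)ᴴ * (1 - Bᴴ * B)⁻¹ * (1 - Aᴴ * B) - (1 - Aᴴ * A)).PosSemidef := by
  have hdet := (isUnit_iff_isUnit_det _).mp hB.isUnit
  have hua := star_one_sub_mul_inv_mul_one_sub (a := A) (nonsing_inv_mul _ hdet)
    (mul_nonsing_inv _ hdet)
  simp only [star_eq_conjTranspose] at hua
  rw [hua, add_assoc, add_sub_cancel_left]
  exact (posSemidef_conjTranspose_mul_self _).add (hB.inv.posSemidef.conjTranspose_mul_mul_same _)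

theorem posSemidef_fromBlocks_inv {P C L : Matrix n n K} (hP : P.PosDef) (hC : IsUnit C)
    (h : (Cᴴ * L * C - P).PosSemidef) : (fromBlocks P⁻¹ C⁻¹ C⁻¹ᴴ L).PosSemidef := by
  let := hP.inv.isUnit.invertible
  rw [PosDef.fromBlocks₁₁ _ _ hP.inv,
    nonsing_inv_nonsing_inv _ ((isUnit_iff_isUnit_det _).mp hP.isUnit)]
  have hCdet := (isUnit_iff_isUnit_det _).mp hC
  have hschur : L - C⁻¹ᴴ * P * C⁻¹ = C⁻¹ᴴ * (Cᴴ * L * C - P) * C⁻¹ := by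
    have hCHdet : IsUnit Cᴴ.det := by rw [det_conjTranspose]; exact hCdet.star
    rw [mul_sub, sub_mul, ← mul_assoc, mul_nonsing_inv_cancel_right _ _ hCdet,
      conjTranspose_nonsing_inv, nonsing_inv_mul_cancel_left _ _ hCHdet]
  rw [hschur]
  exact h.conjTranspose_mul_mul_same _

end Matrix

/-- The Hua block matrix of two strict contractions is positive semidefinite. -/
theorem hua_block_posSemidef {n : ℕ} (A B : Matrix (Fin n) (Fin n) ℂ)
    (hA : opNorm A < 1) (hB : opNorm B < 1) :
    (Matrix.fromBlocks (1 - Aᴴ * A)⁻¹ (1 - Aᴴ * B)⁻¹ (1 - Bᴴ * A)⁻¹ (1 - Bᴴ * B)⁻¹).PosSemidef := by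
  have hPA := posDef_one_sub_conjTranspose_mul_self hA
  have hgap := posSemidef_conjTranspose_mul_inv_mul_sub (A := A)
    (posDef_one_sub_conjTranspose_mul_self hB)
  have hC : IsUnit (1 - Aᴴ * B) := by
    refine isUnit_of_mul_isUnit_right (x := (1 - Aᴴ * B)ᴴ * (1 - Bᴴ * B)⁻¹) ?_
    simpa using (hPA.add_posSemidef hgap).isUnit
  have h21 : (1 - Bᴴ * A)⁻¹ = (1 - Aᴴ * B)⁻¹ᴴ := by
    rw [conjTranspose_nonsing_inv, conjTranspose_sub, conjTranspose_one, conjTranspose_mul,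
      conjTranspose_conjTranspose]
  rw [h21]
  exact posSemidef_fromBlocks_inv hPA hC hgap
end

section
/- Let A, B be n×n complex strict contractions and set X = (I - A)^{-1}(I + A), Y = (I - B)^{-1}(I + B). Then I - A*B = 2 (I + X*)^{-1} (X* + Y) (I + Y)^{-1}. -/
/-!
`X` and `Y` are Cayley transforms `cayley A = (1 - A)⁻¹ (1 + A)`, where `1 - A` is invertible for
a strict contraction by the Neumann series. Since `1 - A` and
`1 + A` commute, `cayley A = (1 + A)(1 - A)⁻¹`; hence `(cayley A)ᴴ = cayley Aᴴ` and
`1 + cayley A = 2 (1 - A)⁻¹`. The right-hand side thus becomes `½ (1 - Aᴴ)(Xᴴ + Y)(1 - B)`, and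
`(1 - Aᴴ) Xᴴ = 1 + Aᴴ`, `Y (1 - B) = 1 + B` reduce it to
`½ ((1 + Aᴴ)(1 - B) + (1 - Aᴴ)(1 + B)) = 1 - Aᴴ B`.
-/

open Matrix

namespace Matrix

variable {m K : Type*} [Fintype m] [DecidableEq m]

noncomputable def cayley [CommRing K] (A : Matrix m m K) : Matrix m m K :=
  (1 - A)⁻¹ * (1 + A)

section CommRing

variable [CommRing K] {A B : Matrix m m K}

theorem one_add_cayley (hA : IsUnit (1 - A)) : 1 + cayley A = (2 : K) • (1 - A)⁻¹ := by
  have hdet : IsUnit (1 - A).det := (isUnit_iff_isUnit_det _).mp hA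
  calc 1 + cayley A = (1 - A)⁻¹ * ((1 - A) + (1 + A)) := by
        rw [mul_add, nonsing_inv_mul _ hdet, cayley]
    _ = (2 : K) • (1 - A)⁻¹ := by
        rw [show (1 - A) + (1 + A) = (2 : K) • (1 : Matrix m m K) by rw [two_smul]; abel,
          mul_smul_comm, mul_one]

theorem cayley_eq_mul_inv (hA : IsUnit (1 - A)) : cayley A = (1 + A) * (1 - A)⁻¹ := by
  have hdet : IsUnit (1 - A).det := (isUnit_iff_isUnit_det _).mp hA
  have hcomm : (1 + A) * (1 - A) = (1 - A) * (1 + A) := by noncomm_ring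
  calc cayley A = (1 - A)⁻¹ * ((1 + A) * (1 - A)) * (1 - A)⁻¹ := by
        rw [← mul_assoc (1 - A)⁻¹, mul_nonsing_inv_cancel_right _ _ hdet, cayley]
    _ = (1 + A) * (1 - A)⁻¹ := by
        rw [hcomm, ← mul_assoc (1 - A)⁻¹ (1 - A), nonsing_inv_mul _ hdet, one_mul]

theorem one_sub_mul_cayley_add_cayley_mul_one_sub (hA : IsUnit (1 - A)) (hB : IsUnit (1 - B)) :
    (1 - A) * (cayley A + cayley B) * (1 - B) = (2 : K) • (1 - A * B) := by
  have hAdet : IsUnit (1 - A).det := (isUnit_iff_isUnit_det _).mp hA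
  have hBdet : IsUnit (1 - B).det := (isUnit_iff_isUnit_det _).mp hB
  have hcA : (1 - A) * cayley A = 1 + A := by
    rw [cayley, mul_nonsing_inv_cancel_left _ _ hAdet]
  have hcB : cayley B * (1 - B) = 1 + B := by
    rw [cayley_eq_mul_inv hB, nonsing_inv_mul_cancel_right _ _ hBdet]
  calc (1 - A) * (cayley A + cayley B) * (1 - B)
      = (1 - A) * cayley A * (1 - B) + (1 - A) * (cayley B * (1 - B)) := by noncomm_ring
    _ = (1 + A) * (1 - B) + (1 - A) * (1 + B) := by rw [hcA, hcB]
    _ = (2 : K) • (1 - A * B) := by rw [two_smul]; noncomm_ring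

end CommRing

section StarRing

variable [CommRing K] [StarRing K] {A : Matrix m m K}

theorem isUnit_one_sub_conjTranspose (hA : IsUnit (1 - A)) : IsUnit (1 - Aᴴ) := by
  simpa [conjTranspose_sub] using (isUnit_conjTranspose _).mpr hA

theorem conjTranspose_cayley (hA : IsUnit (1 - A)) : (cayley A)ᴴ = cayley Aᴴ := by
  rw [cayley_eq_mul_inv (isUnit_one_sub_conjTranspose hA), cayley, conjTranspose_mul,
    conjTranspose_nonsing_inv]
  simp only [conjTranspose_add, conjTranspose_sub, conjTranspose_one]

end StarRing

section Field

variable [Field K] {A B : Matrix m m K}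

theorem inv_one_add_cayley (h2 : (2 : K) ≠ 0) (hA : IsUnit (1 - A)) :
    (1 + cayley A)⁻¹ = (2⁻¹ : K) • (1 - A) := by
  have hdet : IsUnit (1 - A).det := (isUnit_iff_isUnit_det _).mp hA
  refine inv_eq_left_inv ?_
  rw [one_add_cayley hA, smul_mul_smul_comm, inv_mul_cancel₀ h2, mul_nonsing_inv _ hdet, one_smul]

theorem one_sub_mul_eq_smul_cayley (h2 : (2 : K) ≠ 0) (hA : IsUnit (1 - A)) (hB : IsUnit (1 - B)) :
    1 - A * B = (2 : K) • ((1 + cayley A)⁻¹ * (cayley A + cayley B) * (1 + cayley B)⁻¹) := by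
  rw [inv_one_add_cayley h2 hA, inv_one_add_cayley h2 hB, smul_mul_assoc, smul_mul_assoc,
    mul_smul_comm, one_sub_mul_cayley_add_cayley_mul_one_sub hA hB, smul_smul, smul_smul,
    smul_smul,
    show (2 : K) * 2⁻¹ * 2⁻¹ * 2 = 1 by field_simp, one_smul]

end Field

end Matrix

lemma isUnit_one_sub_of_opNorm_lt_one {n : ℕ} {A : Matrix (Fin n) (Fin n) ℂ}
    (hA : opNorm A < 1) : IsUnit (1 - A) := by
  have h : IsUnit (1 - Matrix.toEuclideanCLM (𝕜 := ℂ) A) := (Units.oneSub _ hA).isUnit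
  simpa using h.map (Matrix.toEuclideanCLM (𝕜 := ℂ)).symm

/-- Möbius change of variables identity for `I - A*B`. -/
theorem mobius_identity {n : ℕ} (A B : Matrix (Fin n) (Fin n) ℂ)
    (hA : opNorm A < 1) (hB : opNorm B < 1)
    (X Y : Matrix (Fin n) (Fin n) ℂ)
    (hX : X = (1 - A)⁻¹ * (1 + A)) (hY : Y = (1 - B)⁻¹ * (1 + B)) :
    1 - Aᴴ * B = (2 : ℂ) • ((1 + Xᴴ)⁻¹ * (Xᴴ + Y) * (1 + Y)⁻¹) := by
  have hA₁ : IsUnit (1 - A) := isUnit_one_sub_of_opNorm_lt_one hA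
  have hXH : Xᴴ = cayley Aᴴ := hX ▸ conjTranspose_cayley hA₁
  rw [hXH, hY]
  exact one_sub_mul_eq_smul_cayley two_ne_zero (isUnit_one_sub_conjTranspose hA₁)
    (isUnit_one_sub_of_opNorm_lt_one hB)
end

section
/- For 0 ≤ p ≤ 2, the function f(t) = sqrt(log(1 + t^p)) is concave on (0, ∞). -/
/-!
Write `t ^ p = (t ^ (p / 2)) ^ 2`. Then `f = g ∘ (t ↦ t ^ (p / 2))` with `g u = √(log (1 + u ^ 2))`;
the inner map is concave because `p / 2 ≤ 1`, and `g` is increasing and concave on `(0, ∞)`, so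
the composition is concave. The concavity of `g` is a second-derivative computation: `g''(u)` has
the sign of `(1 - u ^ 2) log (1 + u ^ 2) - u ^ 2`, which is nonpositive because
`log (1 + x) ≤ x`.
-/

open Real Set

theorem ConcaveOn.comp_of_mapsTo {𝕜 E α β : Type*} [Semiring 𝕜] [PartialOrder 𝕜]
    [AddCommMonoid E] [AddCommMonoid α] [PartialOrder α] [AddCommMonoid β] [PartialOrder β]
    [SMul 𝕜 E] [SMul 𝕜 α] [SMul 𝕜 β] {s : Set E} {t : Set β} {f : E → β} {g : β → α}
    (hg : ConcaveOn 𝕜 t g) (hf : ConcaveOn 𝕜 s f) (hst : MapsTo f s t) (hg' : MonotoneOn g t) :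
    ConcaveOn 𝕜 s (g ∘ f) :=
  ⟨hf.1, fun _ hx _ hy _ _ ha hb hab =>
    (hg.2 (hst hx) (hst hy) ha hb hab).trans <|
      hg' (hg.1 (hst hx) (hst hy) ha hb hab) (hst (hf.1 hx hy ha hb hab)) (hf.2 hx hy ha hb hab)⟩

theorem one_sub_mul_log_one_add_le {x : ℝ} (hx : 0 ≤ x) : (1 - x) * log (1 + x) ≤ x := by
  have hlog_nonneg : 0 ≤ log (1 + x) := log_nonneg (by linarith)
  have hlog_le : log (1 + x) ≤ x := by linarith [log_le_sub_one_of_pos (by linarith : 0 < 1 + x)]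
  nlinarith [mul_nonneg hx hlog_nonneg]

theorem log_one_add_sq_pos {u : ℝ} (hu : u ≠ 0) : 0 < log (1 + u ^ 2) :=
  log_pos (lt_add_of_pos_right 1 (by positivity))

theorem hasDerivAt_sqrt_log_one_add_sq {u : ℝ} (hu : u ≠ 0) :
    HasDerivAt (fun u => √(log (1 + u ^ 2))) (u / ((1 + u ^ 2) * √(log (1 + u ^ 2)))) u := by
  have hL := log_one_add_sq_pos hu
  have hs : 0 < √(log (1 + u ^ 2)) := sqrt_pos.2 hL
  convert (((hasDerivAt_pow 2 u).const_add 1).log (by positivity)).sqrt hL.ne' using 1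
  field_simp
  ring

theorem hasDerivAt_div_one_add_sq_mul_sqrt_log {u : ℝ} (hu : u ≠ 0) :
    HasDerivAt (fun u => u / ((1 + u ^ 2) * √(log (1 + u ^ 2))))
      (((1 - u ^ 2) * log (1 + u ^ 2) - u ^ 2) /
        ((1 + u ^ 2) ^ 2 * log (1 + u ^ 2) * √(log (1 + u ^ 2)))) u := by
  have hL := log_one_add_sq_pos hu
  have hs : 0 < √(log (1 + u ^ 2)) := sqrt_pos.2 hL
  have hs2 : √(log (1 + u ^ 2)) ^ 2 = log (1 + u ^ 2) := sq_sqrt hL.le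
  refine ((hasDerivAt_id u).div (((hasDerivAt_pow 2 u).const_add 1).mul
    (hasDerivAt_sqrt_log_one_add_sq hu)) (mul_pos (by positivity) hs).ne').congr_deriv ?_
  simp only [id, Pi.mul_apply]
  field_simp
  linear_combination u ^ 2 * hs2

theorem concaveOn_sqrt_log_one_add_sq :
    ConcaveOn ℝ (Ioi 0) (fun u : ℝ => √(log (1 + u ^ 2))) := by
  have hcont : Continuous fun u : ℝ => √(log (1 + u ^ 2)) :=
    ((by fun_prop : Continuous fun u : ℝ => 1 + u ^ 2).log fun u => by positivity).sqrt
  refine concaveOn_of_hasDerivWithinAt2_nonpos (convex_Ioi 0) hcont.continuousOn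
    (fun u hu => (hasDerivAt_sqrt_log_one_add_sq ?_).hasDerivWithinAt)
    (fun u hu => (hasDerivAt_div_one_add_sq_mul_sqrt_log ?_).hasDerivWithinAt)
    (fun u hu => div_nonpos_of_nonpos_of_nonneg
      (sub_nonpos.2 (one_sub_mul_log_one_add_le (sq_nonneg u))) ?_) <;>
    rw [interior_Ioi, mem_Ioi] at hu
  · exact hu.ne'
  · exact hu.ne'
  · have hL := log_one_add_sq_pos hu.ne'
    positivity

theorem monotoneOn_sqrt_log_one_add_sq :
    MonotoneOn (fun u : ℝ => √(log (1 + u ^ 2))) (Ici 0) := fun _ hu _ _ huv =>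
  sqrt_le_sqrt (log_le_log (by positivity) (by gcongr))

/-- For `0 ≤ p ≤ 2`, the function `t ↦ √(log(1 + t^p))` is concave on `(0, ∞)`. -/
theorem sqrt_log_one_add_rpow_concave (p : ℝ) (hp0 : 0 ≤ p) (hp2 : p ≤ 2) :
    ConcaveOn ℝ (Set.Ioi (0 : ℝ)) (fun t => Real.sqrt (Real.log (1 + t ^ p))) := by
  have hrpow : ConcaveOn ℝ (Ioi 0) (fun t : ℝ => t ^ (p / 2)) :=
    (concaveOn_rpow (by linarith) (by linarith)).subset Ioi_subset_Ici_self (convex_Ioi 0)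
  refine (concaveOn_sqrt_log_one_add_sq.comp_of_mapsTo hrpow (fun t ht => rpow_pos_of_pos ht _)
    (monotoneOn_sqrt_log_one_add_sq.mono Ioi_subset_Ici_self)).congr fun t ht => ?_
  simp only [Function.comp_apply, ← rpow_natCast, ← rpow_mul (le_of_lt ht)]
  norm_num
end

section
/- For Hermitian positive definite n×n matrices X, Y, the quantity δ_S(X,Y) = sqrt(log(det((X+Y)/2) / sqrt(det X · det Y))) is well-defined (the argument of the outer log is ≥ 1), symmetric, and vanishes iff X = Y. -/
/-!
Congruence `A ↦ Sᴴ A S` by an invertible `S` scales all three determinants in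
`det((X+Y)/2) / √(det X · det Y)` by `|det S|²`, so the ratio is unchanged. Taking `S = X^{1/2}`
reduces to the pair `(1, M)` with `M = X^{-1/2} Y X^{-1/2}`, where the ratio is
`∏ᵢ ((1 + μᵢ)/2) / √μᵢ` over the eigenvalues `μᵢ > 0` of `M`. Each factor is `≥ 1` by AM-GM, with
equality iff `μᵢ = 1`, that is iff `M = 1`, iff `X = Y`.
-/

open Matrix
open scoped ComplexOrder

/-- The S-divergence of Hermitian positive definite matrices:
`δ_S(X,Y) = √(log(det((X+Y)/2) / √(det X · det Y)))`. -/
noncomputable def deltaS {n : ℕ} (X Y : Matrix (Fin n) (Fin n) ℂ) : ℝ :=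
  Real.sqrt (Real.log ((Matrix.det ((1 / 2 : ℂ) • (X + Y))).re /
    Real.sqrt ((Matrix.det X).re * (Matrix.det Y).re)))

lemma Real.one_le_one_add_div_two_div_sqrt {a : ℝ} (ha : 0 < a) : 1 ≤ (1 + a) / 2 / √a := by
  rw [one_le_div (Real.sqrt_pos.2 ha)]
  nlinarith [sq_nonneg (√a - 1), Real.sq_sqrt ha.le]

lemma Real.one_add_div_two_div_sqrt_eq_one_iff {a : ℝ} (ha : 0 < a) :
    (1 + a) / 2 / √a = 1 ↔ a = 1 := by
  rw [div_eq_one_iff_eq (Real.sqrt_pos.2 ha).ne']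
  refine ⟨fun h => ?_, fun h => by norm_num [h]⟩
  have hs : √a = 1 := by nlinarith [Real.sq_sqrt ha.le]
  simpa [hs] using (Real.sq_sqrt ha.le).symm

lemma Real.sqrt_log_eq_zero_iff {r : ℝ} (hr : 1 ≤ r) : √(Real.log r) = 0 ↔ r = 1 := by
  rw [Real.sqrt_eq_zero (Real.log_nonneg hr)]
  refine ⟨fun h => ?_, fun h => by simp [h]⟩
  rcases Real.log_eq_zero.mp h with h | h | h <;> first | exact h | linarith

lemma Finset.prod_eq_one_iff_of_one_le {ι R : Type*} [CommMonoidWithZero R] [PartialOrder R]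
    [ZeroLEOneClass R] [PosMulStrictMono R] [Nontrivial R] {s : Finset ι} {f : ι → R}
    (hf : ∀ i ∈ s, 1 ≤ f i) : ∏ i ∈ s, f i = 1 ↔ ∀ i ∈ s, f i = 1 := by
  refine ⟨fun h => ?_, Finset.prod_eq_one⟩
  by_contra! ⟨i, hi, hne⟩
  have := Finset.prod_lt_prod (f := 1) (fun _ _ => one_pos) hf ⟨i, hi, (hf i hi).lt_of_ne' hne⟩
  simp [h] at this

namespace CFC

variable {A : Type*} [PartialOrder A] [Ring A] [StarRing A] [TopologicalSpace A]
  [StarOrderedRing A] [Algebra ℝ A] [ContinuousFunctionalCalculus ℝ A IsSelfAdjoint]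
  [NonnegSpectrumClass ℝ A] [IsSemitopologicalRing A] [T2Space A]

lemma conjSqrt_ringInverse_eq_one_iff {c a : A} (hc : IsStrictlyPositive c) :
    conjSqrt (Ring.inverse c) a = 1 ↔ c = a := by
  refine ⟨fun h => ?_, fun h => h ▸ conjSqrt_ringInverse_self c⟩
  rw [← conjSqrt_conjSqrt_ringInverse c a, h, conjSqrt_one c]

end CFC

namespace Matrix

variable {n 𝕜 : Type*} [Fintype n] [DecidableEq n] [RCLike 𝕜]

lemma det_conjStarAlgAut (U : unitary (Matrix n n 𝕜)) (B : Matrix n n 𝕜) :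
    det (Unitary.conjStarAlgAut 𝕜 _ U B) = det B := by
  rw [Unitary.conjStarAlgAut_apply, det_mul_right_comm, Unitary.mul_star_self_of_mem U.2, one_mul]

lemma det_conjTranspose_mul_mul (S C : Matrix n n 𝕜) :
    det (Sᴴ * C * S) = ((‖det S‖ ^ 2 : ℝ) : 𝕜) * det C := by
  rw [det_mul, det_mul, det_conjTranspose, mul_right_comm, RCLike.star_def, RCLike.conj_mul]
  push_cast
  rfl

lemma IsHermitian.det_smul_one_add {A : Matrix n n 𝕜} (hA : A.IsHermitian) (c : 𝕜) :
    det (c • (1 + A)) = ∏ i, c * (1 + hA.eigenvalues i) := by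
  conv_lhs =>
    rw [hA.spectral_theorem, ← map_one (Unitary.conjStarAlgAut 𝕜 _ hA.eigenvectorUnitary),
      ← map_add, ← map_smul, det_conjStarAlgAut, ← diagonal_one, diagonal_add, ← diagonal_smul,
      det_diagonal]
  simp

lemma IsHermitian.eq_one_of_eigenvalues_eq_one {A : Matrix n n 𝕜} (hA : A.IsHermitian)
    (h : ∀ i, hA.eigenvalues i = 1) : A = 1 := by
  rw [hA.spectral_theorem, show RCLike.ofReal ∘ hA.eigenvalues = 1 by ext i; simp [h i],
    Pi.one_def, diagonal_one, map_one]

noncomputable def detMeanRatio (A B : Matrix n n 𝕜) : ℝ :=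
  RCLike.re (det ((1 / 2 : 𝕜) • (A + B))) / √(RCLike.re (det A) * RCLike.re (det B))

lemma detMeanRatio_comm (A B : Matrix n n 𝕜) : detMeanRatio A B = detMeanRatio B A := by
  rw [detMeanRatio, detMeanRatio, add_comm, mul_comm (RCLike.re (det A))]

lemma detMeanRatio_conjTranspose_mul_mul {S : Matrix n n 𝕜} (hS : det S ≠ 0)
    (A B : Matrix n n 𝕜) : detMeanRatio (Sᴴ * A * S) (Sᴴ * B * S) = detMeanRatio A B := by
  have hk : 0 < ‖det S‖ ^ 2 := by positivity
  have hmean : (1 / 2 : 𝕜) • (Sᴴ * A * S + Sᴴ * B * S) = Sᴴ * ((1 / 2 : 𝕜) • (A + B)) * S := by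
    rw [← add_mul, ← mul_add, mul_smul_comm, smul_mul_assoc]
  simp only [detMeanRatio, hmean, det_conjTranspose_mul_mul, RCLike.re_ofReal_mul]
  rw [mul_mul_mul_comm, Real.sqrt_mul (mul_self_nonneg _), Real.sqrt_mul_self hk.le,
    mul_div_mul_left _ _ hk.ne']

namespace PosDef

variable {M X Y : Matrix n n 𝕜}

lemma detMeanRatio_one_eq (hM : M.PosDef) :
    detMeanRatio 1 M =
      ∏ i, (1 + hM.isHermitian.eigenvalues i) / 2 / √(hM.isHermitian.eigenvalues i) := by
  have hdet : det M = ((∏ i, hM.isHermitian.eigenvalues i : ℝ) : 𝕜) := by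
    rw [hM.isHermitian.det_eq_prod_eigenvalues, RCLike.ofReal_prod]
  have hmean : det ((1 / 2 : 𝕜) • (1 + M)) =
      ((∏ i, (1 + hM.isHermitian.eigenvalues i) / 2 : ℝ) : 𝕜) := by
    rw [hM.isHermitian.det_smul_one_add, RCLike.ofReal_prod]
    congr! 1 with i
    push_cast
    ring
  rw [detMeanRatio, hmean, hdet, det_one, RCLike.one_re, one_mul, RCLike.ofReal_re,
    RCLike.ofReal_re, Real.sqrt_prod _ (fun i _ => (hM.eigenvalues_pos i).le),
    ← Finset.prod_div_distrib]

lemma one_le_detMeanRatio_one (hM : M.PosDef) : 1 ≤ detMeanRatio 1 M := by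
  rw [hM.detMeanRatio_one_eq]
  exact Finset.one_le_prod fun i _ => Real.one_le_one_add_div_two_div_sqrt (hM.eigenvalues_pos i)

lemma detMeanRatio_one_eq_one_iff (hM : M.PosDef) : detMeanRatio 1 M = 1 ↔ M = 1 := by
  refine ⟨fun h => hM.isHermitian.eq_one_of_eigenvalues_eq_one fun i => ?_, ?_⟩
  · rw [hM.detMeanRatio_one_eq, Finset.prod_eq_one_iff_of_one_le
      fun i _ => Real.one_le_one_add_div_two_div_sqrt (hM.eigenvalues_pos i)] at h
    exact (Real.one_add_div_two_div_sqrt_eq_one_iff (hM.eigenvalues_pos i)).1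
      (h i (Finset.mem_univ i))
  · rintro rfl
    have hmean : (1 / 2 : 𝕜) • (1 + 1 : Matrix n n 𝕜) = 1 := by
      rw [← two_smul 𝕜, smul_smul]
      norm_num
    rw [detMeanRatio, hmean, det_one, RCLike.one_re, one_mul, Real.sqrt_one, div_one]

open scoped MatrixOrder

lemma conjSqrt_ringInverse (hX : X.PosDef) (hY : Y.PosDef) :
    (CFC.conjSqrt (Ring.inverse X) Y).PosDef :=
  ((CFC.isStrictlyPositive_conjSqrt_iff _ _ hX.isStrictlyPositive.ringInverse).2
    hY.isStrictlyPositive).posDef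

lemma detMeanRatio_eq_detMeanRatio_one_conjSqrt (hX : X.PosDef) (Y : Matrix n n 𝕜) :
    detMeanRatio X Y = detMeanRatio 1 (CFC.conjSqrt (Ring.inverse X) Y) := by
  have hS : (CFC.sqrt X)ᴴ = CFC.sqrt X := (CFC.sqrt_nonneg X).isSelfAdjoint
  have hdet : det (CFC.sqrt X) ≠ 0 := ((isUnit_iff_isUnit_det _).mp
    (CFC.isUnit_sqrt_iff_isStrictlyPositive.mpr hX.isStrictlyPositive)).ne_zero
  conv_lhs => rw [← CFC.conjSqrt_one X, ← CFC.conjSqrt_conjSqrt_ringInverse X Y]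
  rw [CFC.conjSqrt_apply, CFC.conjSqrt_apply]
  simpa only [hS] using detMeanRatio_conjTranspose_mul_mul hdet _ _

lemma one_le_detMeanRatio (hX : X.PosDef) (hY : Y.PosDef) : 1 ≤ detMeanRatio X Y := by
  rw [hX.detMeanRatio_eq_detMeanRatio_one_conjSqrt]
  exact (hX.conjSqrt_ringInverse hY).one_le_detMeanRatio_one

lemma detMeanRatio_eq_one_iff (hX : X.PosDef) (hY : Y.PosDef) :
    detMeanRatio X Y = 1 ↔ X = Y := by
  rw [hX.detMeanRatio_eq_detMeanRatio_one_conjSqrt,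
    (hX.conjSqrt_ringInverse hY).detMeanRatio_one_eq_one_iff,
    CFC.conjSqrt_ringInverse_eq_one_iff hX.isStrictlyPositive]

end PosDef

end Matrix

lemma deltaS_eq_sqrt_log_detMeanRatio {n : ℕ} (X Y : Matrix (Fin n) (Fin n) ℂ) :
    deltaS X Y = √(Real.log (detMeanRatio X Y)) := rfl

/-- The S-divergence is well defined (the argument of the logarithm is `≥ 1`),
symmetric, and vanishes iff the arguments agree. -/
theorem deltaS_basic {n : ℕ} (X Y : Matrix (Fin n) (Fin n) ℂ)
    (hX : X.PosDef) (hY : Y.PosDef) :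
    1 ≤ (Matrix.det ((1 / 2 : ℂ) • (X + Y))).re /
        Real.sqrt ((Matrix.det X).re * (Matrix.det Y).re) ∧
    deltaS X Y = deltaS Y X ∧
    (deltaS X Y = 0 ↔ X = Y) := by
  have hratio : 1 ≤ detMeanRatio X Y := hX.one_le_detMeanRatio hY
  refine ⟨hratio, ?_, ?_⟩
  · rw [deltaS_eq_sqrt_log_detMeanRatio, deltaS_eq_sqrt_log_detMeanRatio, detMeanRatio_comm]
  · rw [deltaS_eq_sqrt_log_detMeanRatio, Real.sqrt_log_eq_zero_iff hratio,
      hX.detMeanRatio_eq_one_iff hY]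
end

section
/- For n×n Hermitian positive definite matrices X, Y, one has det((X+Y)/2) ≥ sqrt(det(X) det(Y)), with equality iff X = Y. -/
open Matrix
open scoped ComplexOrder

/-! Write `X = Bᴴ B` and `Y = Bᴴ M B` with `B` invertible and `M` positive definite. Every
determinant in the statement then picks up the factor `|det B|²`, which reduces the claim to
`X = 1`. There, over the eigenvalues `λᵢ` of `M`,
`det ((1 + M) / 2) = ∏ (1 + λᵢ) / 2 ≥ ∏ √λᵢ = √(det M)`
by AM-GM for each eigenvalue, with equality iff every `λᵢ = 1`, i.e. iff `M = 1`. -/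

namespace Real

theorem sqrt_le_one_add_div_two {x : ℝ} (hx : 0 ≤ x) : √x ≤ (1 + x) / 2 := by
  nlinarith [sq_nonneg (√x - 1), sq_sqrt hx]

theorem sqrt_lt_one_add_div_two {x : ℝ} (hx : 0 ≤ x) (h1 : x ≠ 1) : √x < (1 + x) / 2 := by
  have : √x ≠ 1 := fun h => h1 (by rw [← sq_sqrt hx, h, one_pow])
  nlinarith [sq_pos_of_ne_zero (sub_ne_zero.2 this), sq_sqrt hx]

theorem sqrt_prod_le_prod_one_add_div_two {ι : Type*} (s : Finset ι) {x : ι → ℝ}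
    (hx : ∀ i ∈ s, 0 ≤ x i) : √(∏ i ∈ s, x i) ≤ ∏ i ∈ s, (1 + x i) / 2 := by
  rw [sqrt_prod s hx]
  exact Finset.prod_le_prod (fun i _ => sqrt_nonneg _) fun i hi => sqrt_le_one_add_div_two (hx i hi)

theorem sqrt_prod_lt_prod_one_add_div_two {ι : Type*} (s : Finset ι) {x : ι → ℝ}
    (hx : ∀ i ∈ s, 0 < x i) (h1 : ∃ i ∈ s, x i ≠ 1) :
    √(∏ i ∈ s, x i) < ∏ i ∈ s, (1 + x i) / 2 := by
  rw [sqrt_prod s fun i hi => (hx i hi).le]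
  obtain ⟨j, hj, hj1⟩ := h1
  exact Finset.prod_lt_prod (fun i hi => sqrt_pos.2 (hx i hi))
    (fun i hi => sqrt_le_one_add_div_two (hx i hi).le)
    ⟨j, hj, sqrt_lt_one_add_div_two (hx j hj).le hj1⟩

end Real

namespace Matrix

variable {𝕜 n : Type*} [RCLike 𝕜] [Fintype n] [DecidableEq n] {A : Matrix n n 𝕜}

theorem det_star_mul_mul (B A : Matrix n n 𝕜) :
    det (star B * A * B) = (‖det B‖ ^ 2 : ℝ) * det A := by
  rw [det_mul, det_mul, star_eq_conjTranspose, det_conjTranspose, mul_right_comm, RCLike.star_def,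
    RCLike.conj_mul]
  push_cast
  rfl

theorem re_det_star_mul_mul (B A : Matrix n n 𝕜) :
    RCLike.re (det (star B * A * B)) = ‖det B‖ ^ 2 * RCLike.re (det A) := by
  rw [det_star_mul_mul, RCLike.re_ofReal_mul]

theorem re_det_star_mul_self (B : Matrix n n 𝕜) :
    RCLike.re (det (star B * B)) = ‖det B‖ ^ 2 := by
  simpa using re_det_star_mul_mul B 1

namespace IsHermitian

theorem re_det (hA : A.IsHermitian) : RCLike.re (det A) = ∏ i, hA.eigenvalues i := by
  rw [hA.det_eq_prod_eigenvalues, ← RCLike.ofReal_prod, RCLike.ofReal_re]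

theorem det_one_add (hA : A.IsHermitian) :
    det (1 + A) = ∏ i, ((1 + hA.eigenvalues i : ℝ) : 𝕜) := by
  conv_lhs => rw [hA.spectral_theorem,
    ← map_one (Unitary.conjStarAlgAut 𝕜 _ hA.eigenvectorUnitary), ← map_add, ← diagonal_one,
    diagonal_add]
  simp only [Function.comp_apply, det_map, det_diagonal, map_add, map_one]

theorem re_det_half_one_add (hA : A.IsHermitian) :
    RCLike.re (det ((1 / 2 : 𝕜) • (1 + A))) = ∏ i, (1 + hA.eigenvalues i) / 2 := by
  have half : (1 / 2 : 𝕜) = ((1 / 2 : ℝ) : 𝕜) := by push_cast; ring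
  rw [det_smul, hA.det_one_add, half, ← RCLike.ofReal_pow, ← RCLike.ofReal_prod,
    ← RCLike.ofReal_mul, RCLike.ofReal_re, Finset.prod_div_distrib, Finset.prod_const,
    Finset.card_univ, one_div, inv_pow, inv_mul_eq_div]

theorem eq_one_of_eigenvalues_eq_one_s9 (hA : A.IsHermitian) (h : ∀ i, hA.eigenvalues i = 1) :
    A = 1 := by
  rw [hA.spectral_theorem]
  simp [Function.comp_def, h]

end IsHermitian

theorem PosSemidef.sqrt_re_det_le_re_det_half_one_add (hA : A.PosSemidef) :
    √(RCLike.re (det A)) ≤ RCLike.re (det ((1 / 2 : 𝕜) • (1 + A))) := by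
  rw [hA.isHermitian.re_det, hA.isHermitian.re_det_half_one_add]
  exact Real.sqrt_prod_le_prod_one_add_div_two _ fun i _ => hA.eigenvalues_nonneg i

theorem PosDef.re_det_half_one_add_eq_sqrt_re_det_iff (hA : A.PosDef) :
    RCLike.re (det ((1 / 2 : 𝕜) • (1 + A))) = √(RCLike.re (det A)) ↔ A = 1 := by
  refine ⟨fun h => ?_, ?_⟩
  · by_contra hA1
    have hne : ∃ i ∈ Finset.univ, hA.isHermitian.eigenvalues i ≠ 1 := by
      simpa using mt hA.isHermitian.eq_one_of_eigenvalues_eq_one_s9 hA1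
    have hlt := Real.sqrt_prod_lt_prod_one_add_div_two _ (fun i _ => hA.eigenvalues_pos i) hne
    rw [← hA.isHermitian.re_det, ← hA.isHermitian.re_det_half_one_add] at hlt
    exact hlt.ne' h
  · rintro rfl
    rw [← two_smul 𝕜, smul_smul]
    norm_num

open scoped MatrixOrder in
theorem PosDef.exists_units_eq_star_mul_self (hA : A.PosDef) :
    ∃ B : (Matrix n n 𝕜)ˣ, A = star (B : Matrix n n 𝕜) * B := by
  obtain ⟨B, hB, rfl⟩ :=
    CStarAlgebra.isStrictlyPositive_iff_eq_star_mul_self.mp hA.isStrictlyPositive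
  exact ⟨hB.unit, rfl⟩

theorem PosDef.exists_eq_star_mul_self_and_eq_star_mul_mul {A C : Matrix n n 𝕜} (hA : A.PosDef)
    (hC : C.PosDef) : ∃ B M : Matrix n n 𝕜, IsUnit B ∧ M.PosDef ∧
      A = star B * B ∧ C = star B * M * B := by
  obtain ⟨B, rfl⟩ := hA.exists_units_eq_star_mul_self
  set B' : Matrix n n 𝕜 := ↑B⁻¹
  refine ⟨B, star B' * C * B', B.isUnit,
    (IsUnit.posDef_star_left_conjugate_iff B⁻¹.isUnit).mpr hC, rfl, ?_⟩
  rw [mul_assoc, mul_assoc _ B', Units.inv_mul, mul_one, ← mul_assoc, ← star_mul, Units.inv_mul,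
    star_one, one_mul]

end Matrix

/-- Determinant AM-GM inequality for Hermitian positive definite matrices,
with the equality case. -/
theorem det_avg_ge_sqrt_det_mul_det {n : ℕ} (X Y : Matrix (Fin n) (Fin n) ℂ)
    (hX : X.PosDef) (hY : Y.PosDef) :
    Real.sqrt ((Matrix.det X).re * (Matrix.det Y).re) ≤
      (Matrix.det ((1 / 2 : ℂ) • (X + Y))).re ∧
    ((Matrix.det ((1 / 2 : ℂ) • (X + Y))).re =
      Real.sqrt ((Matrix.det X).re * (Matrix.det Y).re) ↔ X = Y) := by
  obtain ⟨B, M, hB, hM, rfl, rfl⟩ := hX.exists_eq_star_mul_self_and_eq_star_mul_mul hY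
  have hc : 0 < ‖det B‖ ^ 2 := by
    have := ((isUnit_iff_isUnit_det B).mp hB).ne_zero
    positivity
  have hsum : (1 / 2 : ℂ) • (star B * B + star B * M * B) =
      star B * ((1 / 2 : ℂ) • (1 + M)) * B := by
    simp only [mul_add, add_mul, mul_smul_comm, smul_mul_assoc, mul_one]
  simp only [← RCLike.re_to_complex]
  rw [hsum, re_det_star_mul_self, re_det_star_mul_mul, re_det_star_mul_mul, ← mul_assoc,
    Real.sqrt_mul (mul_self_nonneg _), Real.sqrt_mul_self hc.le, mul_right_inj' hc.ne',
    hM.re_det_half_one_add_eq_sqrt_re_det_iff]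
  refine ⟨mul_le_mul_of_nonneg_left hM.posSemidef.sqrt_re_det_le_re_det_half_one_add hc.le, ?_⟩
  rw [hB.mul_left_inj, eq_comm (a := star B), hB.star.mul_eq_left]
end
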